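/- arXiv:2603.20922 — 2 statements merged into one kernel-verified Lean document; each statement's English description precedes it below -/
import Mathlib

section
/- Assume k is nonincreasing and nonnegative on [0,∞), and that Σ_{x ∈ X} m(x) = 1. Then λ(X) = −k(diam X), and for every ball B of X one has λ(B) ≤ −k(diam X); in particular |λ(B)| ≥ k(diam X) for every ball B, with equality for B = X, so the spectral gap of the ultrametric Laplacian (the least absolute value of the eigenvalues λ(B)) equals k(diam X). -/
open scoped Classical
open Finset

/-- Closed ball of radius `r` around `x`, as a finset. -/
noncomputable def uball {X : Type*} [Fintype X] (d : X → X → ℝ) (x : X) (r : ℝ) : Finset X :=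
  Finset.univ.filter fun y => d x y ≤ r

/-- A ball of the ultrametric space: a closed ball of nonnegative radius. -/
def IsBall {X : Type*} [Fintype X] (d : X → X → ℝ) (B : Finset X) : Prop :=
  ∃ x r, 0 ≤ r ∧ B = uball d x r

/-- Diameter of a finite set: maximum of `d` over `B × B` (`0` if `B` is empty). -/
noncomputable def fdiam {X : Type*} [Fintype X] (d : X → X → ℝ) (B : Finset X) : ℝ :=
  if h : (B ×ˢ B).Nonempty then (B ×ˢ B).sup' h fun p => d p.1 p.2 else 0

/-- Mass of a set: `m(B) = Σ_{x ∈ B} m(x)`. -/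
noncomputable def mass {X : Type*} [Fintype X] (m : X → ℝ) (B : Finset X) : ℝ :=
  ∑ x ∈ B, m x

/-- The eigenvalue attached to a ball `B`, computed from a base point `x₀ ∈ B`:
`λ(B) = −(Σ_{y ∉ B} k(d(x₀,y))·m(y) + k(diam B)·m(B))`. -/
noncomputable def lamB {X : Type*} [Fintype X] [DecidableEq X]
    (d : X → X → ℝ) (k : ℝ → ℝ) (m : X → ℝ) (B : Finset X) (x₀ : X) : ℝ :=
  -((∑ y ∈ Bᶜ, k (d x₀ y) * m y) + k (fdiam d B) * mass m B)

/-- The parent radius of a ball `B ⊊ X` seen from `x ∈ B`: `r⁺ = min{d(x,y) : y ∉ B}`. -/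
noncomputable def parentR {X : Type*} [Fintype X] [DecidableEq X]
    (d : X → X → ℝ) (B : Finset X) (x : X) : ℝ :=
  if h : (Bᶜ : Finset X).Nonempty then Bᶜ.inf' h fun y => d x y else 0

/-- The parent ball `B⁺ = B(x, r⁺)` of `B ⊊ X`, computed from a base point `x ∈ B`. -/
noncomputable def parentB {X : Type*} [Fintype X] [DecidableEq X]
    (d : X → X → ℝ) (B : Finset X) (x : X) : Finset X :=
  uball d x (parentR d B x)

/-- The ultrametric Laplacian matrix:
`L x y = k(d(x,y))·m(y)` off the diagonal and `L x x = −Σ_{z ≠ x} k(d(x,z))·m(z)`. -/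
noncomputable def ultraLap {X : Type*} [Fintype X] [DecidableEq X]
    (d : X → X → ℝ) (k : ℝ → ℝ) (m : X → ℝ) : Matrix X X ℝ :=
  fun x y => if y = x then -(∑ z ∈ ({x}ᶜ : Finset X), k (d x z) * m z) else k (d x y) * m y

/-- The smallest ball containing `x` and `y` and having at least two elements:
`B(x, d(x,y))` for `x ≠ y`, and `B(x, min_{z ≠ x} d(x,z))` for `x = y`. -/
noncomputable def sball {X : Type*} [Fintype X] [DecidableEq X]
    (d : X → X → ℝ) (x y : X) : Finset X :=
  if x = y then
    (if h : (({x}ᶜ : Finset X)).Nonempty then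
      uball d x ((({x}ᶜ : Finset X)).inf' h fun z => d x z)
     else uball d x 0)
  else uball d x (d x y)

/-! Since `k` is nonincreasing on `[0,∞)` and every distance is at most `diam X`, each of the
two sums in `-λ(B) = Σ_{y ∉ B} k(d(x₀,y))·m(y) + k(diam B)·m(B)` is at least `k(diam X)` times
the corresponding mass, so `-λ(B) ≥ k(diam X)·m(X)`, with equality for `B = X`. -/

section

variable {X : Type*} {d : X → X → ℝ}

lemma nonneg_of_ultrametric (hdiag : ∀ x, d x x = 0) (hsymm : ∀ x y, d x y = d y x)
    (hultra : ∀ x y z, d x z ≤ max (d x y) (d y z)) (x y : X) : 0 ≤ d x y := by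
  simpa [hdiag, hsymm y x] using hultra x y x

variable [Fintype X]

lemma le_fdiam {B : Finset X} {x y : X} (hx : x ∈ B) (hy : y ∈ B) : d x y ≤ fdiam d B := by
  rw [fdiam, dif_pos ⟨(x, y), mk_mem_product hx hy⟩]
  exact le_sup' (fun p : X × X => d p.1 p.2) (mk_mem_product hx hy)

lemma fdiam_nonneg (hd : ∀ x y, 0 ≤ d x y) {B : Finset X} {x : X} (hx : x ∈ B) :
    0 ≤ fdiam d B :=
  (hd x x).trans (le_fdiam hx hx)

lemma fdiam_le_fdiam_univ {B : Finset X} (hB : B.Nonempty) : fdiam d B ≤ fdiam d univ := by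
  rw [fdiam, dif_pos (hB.product hB)]
  exact sup'_le _ _ fun p _ => le_fdiam (mem_univ p.1) (mem_univ p.2)

variable [DecidableEq X] {k : ℝ → ℝ} {m : X → ℝ}

lemma lamB_univ (x₀ : X) : lamB d k m univ x₀ = -(k (fdiam d univ) * mass m univ) := by
  simp [lamB]

lemma lamB_le_neg_mul_mass_univ (hd : ∀ x y, 0 ≤ d x y) (hk : AntitoneOn k (Set.Ici 0))
    (hm : ∀ x, 0 ≤ m x) {B : Finset X} {x₀ : X} (hx₀ : x₀ ∈ B) :
    lamB d k m B x₀ ≤ -(k (fdiam d univ) * mass m univ) := by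
  have hD : 0 ≤ fdiam d univ := fdiam_nonneg hd (mem_univ x₀)
  have hout : k (fdiam d univ) * mass m Bᶜ ≤ ∑ y ∈ Bᶜ, k (d x₀ y) * m y := by
    rw [mass, mul_sum]
    exact sum_le_sum fun y _ => mul_le_mul_of_nonneg_right
      (hk (hd x₀ y) hD (le_fdiam (mem_univ x₀) (mem_univ y))) (hm y)
  have hin : k (fdiam d univ) * mass m B ≤ k (fdiam d B) * mass m B :=
    mul_le_mul_of_nonneg_right (hk (fdiam_nonneg hd hx₀) hD (fdiam_le_fdiam_univ ⟨x₀, hx₀⟩))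
      (sum_nonneg fun x _ => hm x)
  have hsplit : mass m univ = mass m Bᶜ + mass m B := (sum_compl_add_sum B m).symm
  rw [lamB, hsplit]
  linarith

end

theorem stmt3_general {X : Type*} [Fintype X] [DecidableEq X]
    (d : X → X → ℝ)
    (hd0 : ∀ x y, d x y = 0 ↔ x = y)
    (hsymm : ∀ x y, d x y = d y x)
    (hultra : ∀ x y z, d x z ≤ max (d x y) (d y z))
    (m : X → ℝ) (hm : ∀ x, 0 < m x) (k : ℝ → ℝ)
    (hk : ∀ a b, 0 ≤ a → a ≤ b → k b ≤ k a)
    (hknn : ∀ r, 0 ≤ r → 0 ≤ k r)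
    (hprob : ∑ x, m x = 1) :
    (∀ x₀ : X, lamB d k m Finset.univ x₀ = -k (fdiam d Finset.univ)) ∧
    (∀ B : Finset X, IsBall d B → ∀ x₀ ∈ B,
        lamB d k m B x₀ ≤ -k (fdiam d Finset.univ) ∧
        k (fdiam d Finset.univ) ≤ |lamB d k m B x₀|) ∧
    (∀ x₀ : X, |lamB d k m Finset.univ x₀| = k (fdiam d Finset.univ)) := by
  have hd : ∀ x y, 0 ≤ d x y := nonneg_of_ultrametric (fun x => (hd0 x x).mpr rfl) hsymm hultra
  have hmass : mass m univ = 1 := hprob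
  have hlamX : ∀ x₀ : X, lamB d k m univ x₀ = -k (fdiam d univ) := fun x₀ => by
    rw [lamB_univ, hmass, mul_one]
  refine ⟨hlamX, fun B _ x₀ hx₀ => ?_, fun x₀ => ?_⟩
  · have h := lamB_le_neg_mul_mass_univ hd (fun a ha b _ hab => hk a b ha hab)
      (fun x => (hm x).le) hx₀
    rw [hmass, mul_one] at h
    exact ⟨h, (le_neg.mp h).trans (neg_le_abs _)⟩
  · rw [hlamX, abs_neg, abs_of_nonneg (hknn _ (fdiam_nonneg hd (mem_univ x₀)))]

/-- If `k` is nonincreasing and nonnegative on `[0,∞)` and `m` is a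
probability weight, then `λ(X) = −k(diam X)`, every ball satisfies
`λ(B) ≤ −k(diam X)` and `|λ(B)| ≥ k(diam X)`, with equality for `B = X`:
the spectral gap equals `k(diam X)`. -/
theorem stmt3 {X : Type*} [Fintype X] [DecidableEq X]
    (hX : 1 < Fintype.card X)
    (d : X → X → ℝ)
    (hd0 : ∀ x y, d x y = 0 ↔ x = y)
    (hsymm : ∀ x y, d x y = d y x)
    (hultra : ∀ x y z, d x z ≤ max (d x y) (d y z))
    (m : X → ℝ) (hm : ∀ x, 0 < m x) (k : ℝ → ℝ)
    (hk : ∀ a b, 0 ≤ a → a ≤ b → k b ≤ k a)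
    (hknn : ∀ r, 0 ≤ r → 0 ≤ k r)
    (hprob : ∑ x, m x = 1) :
    (∀ x₀ : X, lamB d k m Finset.univ x₀ = -k (fdiam d Finset.univ)) ∧
    (∀ B : Finset X, IsBall d B → ∀ x₀ ∈ B,
        lamB d k m B x₀ ≤ -k (fdiam d Finset.univ) ∧
        k (fdiam d Finset.univ) ≤ |lamB d k m B x₀|) ∧
    (∀ x₀ : X, |lamB d k m Finset.univ x₀| = k (fdiam d Finset.univ)) :=
  stmt3_general d hd0 hsymm hultra m hm k hk hknn hprob
end

section
/- Let x, y ∈ X with x ≠ y. Then Σ_B ( k(diam B) − k(diam B⁺) ) + k(diam X) = k(d(x,y)), where the sum ranges over all balls B of X with B ⊊ X that contain both x and y (these are exactly the balls B with B(x, d(x,y)) ⊆ B ⊊ X, and they form a chain under inclusion). -/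
open scoped Classical
open Finset

/-!
Fix `x`. In an ultrametric space every point of a ball is a centre, so the balls containing `x`
are exactly the sets `B(x, r)`, and each `B ⊊ X` among them is the open ball `{z | d x z < r⁺}`
with `r⁺ = diam B⁺`. Hence `B ↦ B⁺` is a bijection from the proper balls containing `x` and `y`
onto the balls containing `x` and `y` other than the smallest one `B(x, d(x,y))`, with inverse
`C ↦ {z | d x z < diam C}`. The sum therefore telescopes to `k(diam B(x, d(x,y))) - k(diam X)`.
-/

noncomputable def oball {X : Type*} [Fintype X] (d : X → X → ℝ) (x : X) (s : ℝ) : Finset X :=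
  univ.filter fun z => d x z < s

noncomputable def ballsThrough {X : Type*} [Fintype X] (d : X → X → ℝ) (x y : X) :
    Finset (Finset X) :=
  univ.filter fun B => IsBall d B ∧ x ∈ B ∧ y ∈ B

lemma dist_nonneg_of_ultra {X : Type*} {d : X → X → ℝ} (hself : ∀ a, d a a = 0)
    (hsymm : ∀ a b, d a b = d b a) (hultra : ∀ a b c, d a c ≤ max (d a b) (d b c)) (a b : X) :
    0 ≤ d a b := by
  simpa [hself, hsymm b a] using hultra a b a

section Ultrametric

variable {X : Type*} [Fintype X] {d : X → X → ℝ} {x : X}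

@[simp]
lemma mem_uball {z : X} {r : ℝ} : z ∈ uball d x r ↔ d x z ≤ r := by
  simp [uball]

@[simp]
lemma mem_oball {z : X} {s : ℝ} : z ∈ oball d x s ↔ d x z < s := by
  simp [oball]

@[simp]
lemma mem_ballsThrough {y : X} {B : Finset X} :
    B ∈ ballsThrough d x y ↔ IsBall d B ∧ x ∈ B ∧ y ∈ B := by
  simp [ballsThrough]

lemma mem_uball_self (hself : ∀ a, d a a = 0) {r : ℝ} (hr : 0 ≤ r) : x ∈ uball d x r :=
  mem_uball.2 (by rw [hself]; exact hr)

lemma dist_le_fdiam {B : Finset X} {z w : X} (hz : z ∈ B) (hw : w ∈ B) : d z w ≤ fdiam d B := by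
  have hzw : (z, w) ∈ B ×ˢ B := mem_product.2 ⟨hz, hw⟩
  rw [fdiam, dif_pos ⟨_, hzw⟩]
  exact le_sup' (fun p : X × X => d p.1 p.2) hzw

lemma uball_eq_of_mem (hsymm : ∀ a b, d a b = d b a)
    (hultra : ∀ a b c, d a c ≤ max (d a b) (d b c)) {c : X} {r : ℝ} (hx : x ∈ uball d c r) :
    uball d c r = uball d x r := by
  rw [mem_uball] at hx
  ext z
  simp only [mem_uball]
  constructor
  · exact fun hz => (hultra x c z).trans (max_le (hsymm x c ▸ hx) hz)
  · exact fun hz => (hultra c x z).trans (max_le hx hz)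

lemma fdiam_uball_le (hsymm : ∀ a b, d a b = d b a)
    (hultra : ∀ a b c, d a c ≤ max (d a b) (d b c)) {r : ℝ} (hr : 0 ≤ r) :
    fdiam d (uball d x r) ≤ r := by
  unfold fdiam
  split_ifs with hne
  · refine sup'_le _ _ fun p hp => ?_
    obtain ⟨h₁, h₂⟩ := mem_product.1 hp
    exact (hultra p.1 x p.2).trans
      (max_le (hsymm p.1 x ▸ mem_uball.1 h₁) (mem_uball.1 h₂))
  · exact hr

lemma fdiam_uball_of_dist_eq (hself : ∀ a, d a a = 0) (hsymm : ∀ a b, d a b = d b a)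
    (hultra : ∀ a b c, d a c ≤ max (d a b) (d b c)) {w : X} {r : ℝ} (hw : d x w = r) :
    fdiam d (uball d x r) = r := by
  subst hw
  have hr := dist_nonneg_of_ultra hself hsymm hultra x w
  exact le_antisymm (fdiam_uball_le hsymm hultra hr)
    (dist_le_fdiam (mem_uball_self hself hr) (mem_uball.2 le_rfl))

lemma exists_dist_eq_fdiam (hsymm : ∀ a b, d a b = d b a)
    (hultra : ∀ a b c, d a c ≤ max (d a b) (d b c)) {B : Finset X} (hx : x ∈ B) :
    ∃ w ∈ B, d x w = fdiam d B := by
  have hne : (B ×ˢ B).Nonempty := ⟨(x, x), mem_product.2 ⟨hx, hx⟩⟩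
  obtain ⟨⟨a, b⟩, hp, hab⟩ := exists_mem_eq_sup' hne fun p : X × X => d p.1 p.2
  obtain ⟨ha, hb⟩ := mem_product.1 hp
  have hdiam : fdiam d B = d a b := by rw [fdiam, dif_pos hne]; exact hab
  have hmax : fdiam d B ≤ max (d x a) (d x b) := hdiam ▸ hsymm a x ▸ hultra a x b
  rcases le_max_iff.1 hmax with h | h
  · exact ⟨a, ha, le_antisymm (dist_le_fdiam hx ha) h⟩
  · exact ⟨b, hb, le_antisymm (dist_le_fdiam hx hb) h⟩

lemma IsBall.eq_uball_fdiam (hsymm : ∀ a b, d a b = d b a)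
    (hultra : ∀ a b c, d a c ≤ max (d a b) (d b c)) {B : Finset X} (hB : IsBall d B)
    (hx : x ∈ B) : B = uball d x (fdiam d B) := by
  obtain ⟨c, r, hr, rfl⟩ := hB
  have hcentre := uball_eq_of_mem hsymm hultra hx
  rw [hcentre] at hx ⊢
  refine le_antisymm (fun z hz => mem_uball.2 (dist_le_fdiam hx hz)) fun z hz => ?_
  exact mem_uball.2 ((mem_uball.1 hz).trans (fdiam_uball_le hsymm hultra hr))

lemma isBall_oball (hself : ∀ a, d a a = 0) {s : ℝ} (hs : 0 < s) : IsBall d (oball d x s) := by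
  have hx : x ∈ oball d x s := mem_oball.2 (by rw [hself]; exact hs)
  obtain ⟨z₀, hz₀, hmax⟩ := exists_max_image (oball d x s) (d x) ⟨x, hx⟩
  refine ⟨x, d x z₀, hself x ▸ hmax x hx, ?_⟩
  ext z
  simp only [mem_oball, mem_uball]
  exact ⟨fun hz => hmax z (mem_oball.2 hz), fun hz => hz.trans_lt (mem_oball.1 hz₀)⟩

lemma isBall_univ (hself : ∀ a, d a a = 0) (x : X) : IsBall d (univ : Finset X) := by
  obtain ⟨z₀, -, hmax⟩ := exists_max_image univ (d x) ⟨x, mem_univ x⟩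
  refine ⟨x, d x z₀, hself x ▸ hmax x (mem_univ x), ?_⟩
  ext z
  simpa using hmax z (mem_univ z)

section Parent

variable [DecidableEq X]

lemma parentR_le_dist {B : Finset X} {z : X} (hz : z ∉ B) : parentR d B x ≤ d x z := by
  have hc : Bᶜ.Nonempty := ⟨z, mem_compl.2 hz⟩
  rw [parentR, dif_pos hc]
  exact inf'_le _ (mem_compl.2 hz)

lemma exists_dist_eq_parentR {B : Finset X} (hB : B ≠ univ) :
    ∃ w ∉ B, d x w = parentR d B x := by
  have hc : Bᶜ.Nonempty := nonempty_iff_ne_empty.2 ((compl_eq_empty_iff B).not.2 hB)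
  obtain ⟨w, hw, hwe⟩ := exists_mem_eq_inf' hc (d x)
  exact ⟨w, mem_compl.1 hw, by rw [parentR, dif_pos hc, hwe]⟩

lemma fdiam_parentB (hself : ∀ a, d a a = 0) (hsymm : ∀ a b, d a b = d b a)
    (hultra : ∀ a b c, d a c ≤ max (d a b) (d b c)) {B : Finset X} (hB : B ≠ univ) :
    fdiam d (parentB d B x) = parentR d B x := by
  obtain ⟨w, -, hw⟩ := exists_dist_eq_parentR (x := x) hB
  exact fdiam_uball_of_dist_eq hself hsymm hultra hw

lemma IsBall.eq_oball_parentR (hsymm : ∀ a b, d a b = d b a)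
    (hultra : ∀ a b c, d a c ≤ max (d a b) (d b c)) {B : Finset X} (hB : IsBall d B)
    (hx : x ∈ B) (hne : B ≠ univ) : B = oball d x (parentR d B x) := by
  obtain ⟨w, hwB, hw⟩ := exists_dist_eq_parentR (x := x) hne
  have hBeq := hB.eq_uball_fdiam hsymm hultra hx
  have hdiam : fdiam d B < parentR d B x := by
    rw [← hw, ← not_le]
    exact fun h => hwB (hBeq ▸ mem_uball.2 h)
  ext z
  rw [mem_oball]
  refine ⟨fun hz => ?_, fun hz => ?_⟩
  · exact (dist_le_fdiam hx hz).trans_lt hdiam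
  · by_contra hzB
    exact (parentR_le_dist hzB).not_gt hz

lemma parentB_oball {w : X} {s : ℝ} (hw : d x w = s) :
    parentB d (oball d x s) x = uball d x s := by
  subst hw
  have hwB : w ∉ oball d x (d x w) := by simp
  obtain ⟨w', hw'B, hw'⟩ := exists_dist_eq_parentR (x := x)
    (B := oball d x (d x w)) fun h => hwB (h ▸ mem_univ w)
  have hs : parentR d (oball d x (d x w)) x = d x w :=
    le_antisymm (parentR_le_dist hwB) (hw' ▸ not_lt.1 (mem_oball.not.1 hw'B))
  rw [parentB, hs]

lemma parentB_mem_ballsThrough_erase (hself : ∀ a, d a a = 0) (hsymm : ∀ a b, d a b = d b a)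
    (hultra : ∀ a b c, d a c ≤ max (d a b) (d b c)) {y : X} {B : Finset X}
    (hB : B ∈ (ballsThrough d x y).erase univ) :
    parentB d B x ∈ (ballsThrough d x y).erase (uball d x (d x y)) := by
  obtain ⟨hne, hball, hxB, hyB⟩ : B ≠ univ ∧ IsBall d B ∧ x ∈ B ∧ y ∈ B := by simpa using hB
  have hy : d x y < parentR d B x :=
    mem_oball.1 (hball.eq_oball_parentR hsymm hultra hxB hne ▸ hyB)
  have hr : 0 ≤ parentR d B x := (dist_nonneg_of_ultra hself hsymm hultra x y).trans hy.le
  have hdiam := fdiam_parentB (x := x) hself hsymm hultra hne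
  simp only [mem_erase, mem_ballsThrough]
  refine ⟨fun h => ?_, ⟨x, _, hr, rfl⟩, mem_uball_self hself hr, mem_uball.2 hy.le⟩
  rw [h, fdiam_uball_of_dist_eq hself hsymm hultra rfl] at hdiam
  exact hy.ne hdiam

lemma oball_fdiam_mem_ballsThrough_erase (hself : ∀ a, d a a = 0)
    (hsymm : ∀ a b, d a b = d b a) (hultra : ∀ a b c, d a c ≤ max (d a b) (d b c))
    {y : X} {C : Finset X} (hC : C ∈ (ballsThrough d x y).erase (uball d x (d x y))) :
    oball d x (fdiam d C) ∈ (ballsThrough d x y).erase univ := by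
  obtain ⟨hne, hball, hxC, hyC⟩ :
      C ≠ uball d x (d x y) ∧ IsBall d C ∧ x ∈ C ∧ y ∈ C := by simpa using hC
  have hCeq := hball.eq_uball_fdiam hsymm hultra hxC
  have hy : d x y < fdiam d C :=
    (dist_le_fdiam hxC hyC).lt_of_ne fun h => hne (by rw [hCeq, ← h])
  have hpos : 0 < fdiam d C := (dist_nonneg_of_ultra hself hsymm hultra x y).trans_lt hy
  obtain ⟨w, -, hw⟩ := exists_dist_eq_fdiam hsymm hultra hxC
  simp only [mem_erase, mem_ballsThrough]
  refine ⟨fun h => ?_, isBall_oball hself hpos, mem_oball.2 (by rwa [hself]), mem_oball.2 hy⟩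
  have hwC : w ∈ oball d x (fdiam d C) := h ▸ mem_univ w
  exact (mem_oball.1 hwC).ne hw

lemma sum_parentB_erase_univ {M : Type*} [AddCommMonoid M] (hself : ∀ a, d a a = 0)
    (hsymm : ∀ a b, d a b = d b a) (hultra : ∀ a b c, d a c ≤ max (d a b) (d b c))
    (y : X) (f : Finset X → M) :
    ∑ B ∈ (ballsThrough d x y).erase univ, f (parentB d B x)
      = ∑ C ∈ (ballsThrough d x y).erase (uball d x (d x y)), f C := by
  refine sum_nbij' (fun B => parentB d B x) (fun C => oball d x (fdiam d C))
    (fun B hB => parentB_mem_ballsThrough_erase hself hsymm hultra hB)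
    (fun C hC => oball_fdiam_mem_ballsThrough_erase hself hsymm hultra hC) ?_ ?_ fun _ _ => rfl
  · intro B hB
    obtain ⟨hne, hball, hxB, -⟩ : B ≠ univ ∧ IsBall d B ∧ x ∈ B ∧ y ∈ B := by simpa using hB
    simp only [fdiam_parentB hself hsymm hultra hne]
    exact (hball.eq_oball_parentR hsymm hultra hxB hne).symm
  · intro C hC
    obtain ⟨-, hball, hxC, -⟩ :
        C ≠ uball d x (d x y) ∧ IsBall d C ∧ x ∈ C ∧ y ∈ C := by simpa using hC
    obtain ⟨w, -, hw⟩ := exists_dist_eq_fdiam hsymm hultra hxC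
    simp only [parentB_oball hw]
    exact (hball.eq_uball_fdiam hsymm hultra hxC).symm

end Parent

end Ultrametric

theorem stmt5_general {X : Type*} [Fintype X] [DecidableEq X]
    (d : X → X → ℝ)
    (hd0 : ∀ x y, d x y = 0 ↔ x = y)
    (hsymm : ∀ x y, d x y = d y x)
    (hultra : ∀ x y z, d x z ≤ max (d x y) (d y z))
    (k : ℝ → ℝ)
    (x y : X) :
    (∑ B ∈ Finset.univ.filter
        (fun B : Finset X => IsBall d B ∧ x ∈ B ∧ y ∈ B ∧ B ≠ Finset.univ),
      (k (fdiam d B) - k (fdiam d (parentB d B x)))) + k (fdiam d Finset.univ)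
      = k (d x y) := by
  have hself : ∀ a, d a a = 0 := fun a => (hd0 a a).2 rfl
  have hxy := dist_nonneg_of_ultra hself hsymm hultra x y
  have hS : univ.filter (fun B : Finset X => IsBall d B ∧ x ∈ B ∧ y ∈ B ∧ B ≠ univ)
      = (ballsThrough d x y).erase univ := by
    ext B
    simp only [mem_filter, mem_univ, true_and, mem_erase, mem_ballsThrough]
    tauto
  have huniv : univ ∈ ballsThrough d x y :=
    mem_ballsThrough.2 ⟨isBall_univ hself x, mem_univ x, mem_univ y⟩
  have hB₀ : uball d x (d x y) ∈ ballsThrough d x y :=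
    mem_ballsThrough.2 ⟨⟨x, _, hxy, rfl⟩, mem_uball_self hself hxy, mem_uball.2 le_rfl⟩
  rw [hS, sum_sub_distrib, sum_parentB_erase_univ hself hsymm hultra y fun B => k (fdiam d B)]
  have h_univ := sum_erase_add _ (fun B => k (fdiam d B)) huniv
  have h_B₀ := sum_erase_add _ (fun B => k (fdiam d B)) hB₀
  rw [fdiam_uball_of_dist_eq hself hsymm hultra rfl] at h_B₀
  linarith

/-- For `x ≠ y`, summing the telescoping differences
`k(diam B) − k(diam B⁺)` over all balls `B ⊊ X` containing both `x` and `y`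
and adding `k(diam X)` recovers `k(d(x,y))`. -/
theorem stmt5 {X : Type*} [Fintype X] [DecidableEq X]
    (hX : 1 < Fintype.card X)
    (d : X → X → ℝ)
    (hd0 : ∀ x y, d x y = 0 ↔ x = y)
    (hsymm : ∀ x y, d x y = d y x)
    (hultra : ∀ x y z, d x z ≤ max (d x y) (d y z))
    (k : ℝ → ℝ)
    (x y : X) (hxy : x ≠ y) :
    (∑ B ∈ Finset.univ.filter
        (fun B : Finset X => IsBall d B ∧ x ∈ B ∧ y ∈ B ∧ B ≠ Finset.univ),
      (k (fdiam d B) - k (fdiam d (parentB d B x)))) + k (fdiam d Finset.univ)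
      = k (d x y) :=
  stmt5_general d hd0 hsymm hultra k x y
end
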